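/- arXiv:2005.10372 — 2 statements merged into one kernel-verified Lean document; each statement's English description precedes it below -/
import Mathlib

section
/- The set of powers of 2 contains no nontrivial arithmetic progression: there are no naturals p, r and positive q such that p + r + n·q is a power of 2 for every natural number n. -/
theorem no_ap_in_powers_of_two :
    ¬ ∃ (p r q : ℕ), 0 < q ∧ ∀ n : ℕ, ∃ k : ℕ, p + r + n * q = 2 ^ k := by
  rintro ⟨p, r, q, hq, h⟩
  obtain ⟨k, hk⟩ := h (q + 1)
  obtain ⟨k', hk'⟩ := h (q + 2)
  have hqk : q < 2 ^ k := by nlinarith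
  have hlt : (2:ℕ) ^ k < 2 ^ k' := by nlinarith
  have hkk : k + 1 ≤ k' := (Nat.pow_lt_pow_iff_right Nat.one_lt_two).mp hlt
  have : 2 ^ (k+1) ≤ 2 ^ k' := Nat.pow_le_pow_right (by norm_num) hkk
  have : 2 ^ k' = 2 ^ k + q := by nlinarith
  simp [pow_succ] at *
  omega
end

section
/- For the language L over {a} of words of Fibonacci length, the words a^{F(3k)} (for k with F(3k) > 1) are pairwise Nerode-inequivalent: for i > j, the extension a^{F(3i−1)} distinguishes a^{F(3i)} from a^{F(3j)}. -/
def nerodeSetoidU (L : Language Unit) : Setoid (List Unit) where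
  r u v := ∀ z : List Unit, u ++ z ∈ L ↔ v ++ z ∈ L
  iseqv := ⟨fun _ _ => Iff.rfl, fun h z => (h z).symm, fun h h' z => (h z).trans (h' z)⟩

theorem fib_words_inequivalent (i j : ℕ) (hij : j < i) (hj : 1 < Nat.fib (3 * j)) :
    (List.replicate (Nat.fib (3 * i)) () ++ List.replicate (Nat.fib (3 * i - 1)) () ∈
        {w : List Unit | ∃ k : ℕ, w.length = Nat.fib k}) ∧
    (List.replicate (Nat.fib (3 * j)) () ++ List.replicate (Nat.fib (3 * i - 1)) () ∉
        {w : List Unit | ∃ k : ℕ, w.length = Nat.fib k}) ∧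
    ¬ (nerodeSetoidU {w : List Unit | ∃ k : ℕ, w.length = Nat.fib k}).r
        (List.replicate (Nat.fib (3 * i)) ()) (List.replicate (Nat.fib (3 * j)) ()) := by
  have h3j : 3 ≤ 3 * j := by
    by_contra h
    push_neg at h
    interval_cases h' : (3 * j) <;> simp_all
  have hj1 : 1 ≤ j := by omega
  have hi2 : 2 ≤ i := by omega
  -- fib (3i) + fib (3i-1) = fib (3i+1)
  have hsum1 : Nat.fib (3 * i) + Nat.fib (3 * i - 1) = Nat.fib (3 * i + 1) := by
    have e2 : 3 * i + 1 = (3 * i - 1) + 2 := by omega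
    have e1 : 3 * i - 1 + 1 = 3 * i := by omega
    rw [e2, Nat.fib_add_two, e1]
    omega
  -- fib (3j) < fib (3i - 2)
  have hlt1 : Nat.fib (3 * j) < Nat.fib (3 * i - 2) := by
    calc Nat.fib (3 * j) < Nat.fib (3 * j + 1) := Nat.fib_lt_fib_succ (by omega)
    _ ≤ Nat.fib (3 * i - 2) := Nat.fib_mono (by omega)
  have hlt2 : Nat.fib (3 * j) < Nat.fib (3 * i) := by
    calc Nat.fib (3 * j) < Nat.fib (3 * j + 1) := Nat.fib_lt_fib_succ (by omega)
    _ ≤ Nat.fib (3 * i) := Nat.fib_mono (by omega)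
  have hfib3i : Nat.fib (3 * i) = Nat.fib (3 * i - 2) + Nat.fib (3 * i - 1) := by
    have e2 : 3 * i = (3 * i - 2) + 2 := by omega
    have e1 : 3 * i - 2 + 1 = 3 * i - 1 := by omega
    have h := Nat.fib_add_two (n := 3 * i - 2)
    rw [e1, ← e2] at h
    exact h
  have hmem : (List.replicate (Nat.fib (3 * i)) () ++ List.replicate (Nat.fib (3 * i - 1)) () ∈
      {w : List Unit | ∃ k : ℕ, w.length = Nat.fib k}) := by
    refine ⟨3 * i + 1, ?_⟩
    simp [hsum1]
  have hnmem : (List.replicate (Nat.fib (3 * j)) () ++ List.replicate (Nat.fib (3 * i - 1)) () ∉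
      {w : List Unit | ∃ k : ℕ, w.length = Nat.fib k}) := by
    rintro ⟨k, hk⟩
    simp only [List.length_append, List.length_replicate] at hk
    -- fib (3i-1) < fib k < fib (3i+1)
    have hpos : 0 < Nat.fib (3 * j) := by omega
    have hlow : Nat.fib (3 * i - 1) < Nat.fib k := by omega
    have hhigh : Nat.fib k < Nat.fib (3 * i + 1) := by
      rw [← hsum1]; omega
    have hk1 : 3 * i ≤ k := by
      by_contra h
      push_neg at h
      have := Nat.fib_mono (show k ≤ 3 * i - 1 by omega)
      omega
    have hk2 : k ≤ 3 * i := by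
      by_contra h
      push_neg at h
      have := Nat.fib_mono (show 3 * i + 1 ≤ k by omega)
      omega
    have : k = 3 * i := by omega
    subst this
    omega
  refine ⟨hmem, hnmem, fun h => ?_⟩
  exact hnmem ((h (List.replicate (Nat.fib (3 * i - 1)) ())).mp hmem)
end
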